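/- For any graph G and any k ≥ 1, min{|V(G)|, γ(G)+k−2} ≤ γ_{rk}(G) ≤ k·γ(G). -/

import Mathlib

open Finset

/-- A `k`-rainbow dominating function: every vertex assigned `∅` sees all `k` colors
among its neighbors. -/
def SimpleGraph.IsRainbowDF {V : Type*} {k : ℕ} (G : SimpleGraph V)
    (f : V → Finset (Fin k)) : Prop :=
  ∀ v, f v = ∅ → ∀ c : Fin k, ∃ u, G.Adj v u ∧ c ∈ f u

/-- The `k`-rainbow domination number. -/
noncomputable def SimpleGraph.rainbowNum {V : Type*} [Fintype V] (G : SimpleGraph V)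
    (k : ℕ) : ℕ :=
  sInf {w | ∃ f : V → Finset (Fin k), G.IsRainbowDF f ∧ w = ∑ v, (f v).card}

/-- `S` is a dominating set of `G`. -/
def SimpleGraph.IsDomSet {V : Type*} (G : SimpleGraph V) (S : Set V) : Prop :=
  ∀ v, v ∉ S → ∃ u ∈ S, G.Adj v u

/-- The domination number. -/
noncomputable def SimpleGraph.domNum {V : Type*} [Fintype V] (G : SimpleGraph V) : ℕ :=
  sInf {n | ∃ S : Finset V, G.IsDomSet ↑S ∧ n = S.card}

/-!
For the upper bound, give every vertex of a minimum dominating set all `k` colours.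

For the lower bound, let `f` be a rainbow dominating function of weight `w` with support `S`,
and write `w = |S| + e`. If `S = V` then `w ≥ |V|`. Otherwise every vertex outside `S` sees all
`k` colours on its neighbours in `S`, and these carry at most `e` colours beyond one each, so it
has at least `k - e` (and at least one) neighbours in `S`. Fix `v₀ ∉ S` and remove from `S` a set
`R` of `k - 1 - e` neighbours of `v₀`: the set `{v₀} ∪ (S \ R)` still dominates, so
`γ ≤ |S| - (k - 1 - e) + 1`, that is `γ + k - 2 ≤ w`.
-/

namespace Finset

lemma sum_add_card_le_card_add_sum {ι : Type*} [DecidableEq ι] {s t : Finset ι} {g : ι → ℕ}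
    (hst : s ⊆ t) (hg : ∀ x ∈ t, 1 ≤ g x) :
    ∑ x ∈ s, g x + #t ≤ #s + ∑ x ∈ t, g x := by
  have hdiff : #(t \ s) ≤ ∑ x ∈ t \ s, g x := by
    simpa using card_nsmul_le_sum (t \ s) g 1 fun x hx => hg x (mem_sdiff.1 hx).1
  rw [← sum_sdiff hst, ← card_sdiff_add_card_eq_card hst]
  omega

end Finset

namespace SimpleGraph

variable {V : Type*} {G : SimpleGraph V}

lemma IsDomSet.isRainbowDF_ite [DecidableEq V] {k : ℕ} {S : Finset V} (hS : G.IsDomSet ↑S) :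
    G.IsRainbowDF fun v => if v ∈ S then (univ : Finset (Fin k)) else ∅ := by
  intro v hv c
  have hvS : v ∉ S := fun h => by
    simp only [h, if_true] at hv
    exact (univ_eq_empty_iff.1 hv).false c
  obtain ⟨u, huS, hadj⟩ := hS v hvS
  exact ⟨u, hadj, by simp [mem_coe.1 huS]⟩

lemma isDomSet_insert_sdiff [DecidableEq V] [DecidableRel G.Adj] {S R : Finset V} {v₀ : V}
    (hR : ∀ u ∈ R, G.Adj v₀ u) (hS : ∀ x ∉ S, #R < #{u ∈ S | G.Adj x u}) :
    G.IsDomSet ↑(insert v₀ (S \ R)) := by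
  intro x hx
  simp only [coe_insert, coe_sdiff, Set.mem_insert_iff, Set.mem_sdiff, mem_coe, not_or,
    not_and, not_not] at hx
  by_cases hxS : x ∈ S
  · exact ⟨v₀, mem_insert_self _ _, (hR x (hx.2 hxS)).symm⟩
  · obtain ⟨u, hu, huR⟩ := exists_mem_notMem_of_card_lt_card (hS x hxS)
    rw [mem_filter] at hu
    exact ⟨u, mem_insert_of_mem (mem_sdiff.2 ⟨hu.1, huR⟩), hu.2⟩

variable [Fintype V]

lemma domNum_le {S : Finset V} (hS : G.IsDomSet ↑S) : G.domNum ≤ #S :=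
  Nat.sInf_le ⟨S, hS, rfl⟩

lemma exists_isDomSet_card_eq_domNum :
    ∃ S : Finset V, G.IsDomSet ↑S ∧ #S = G.domNum := by
  obtain ⟨S, hS, hcard⟩ := Nat.sInf_mem (s := {n | ∃ S : Finset V, G.IsDomSet ↑S ∧ n = #S})
    ⟨_, univ, fun v hv => absurd (mem_univ v) hv, rfl⟩
  exact ⟨S, hS, hcard.symm⟩

lemma rainbowNum_le {k : ℕ} {f : V → Finset (Fin k)} (hf : G.IsRainbowDF f) :
    G.rainbowNum k ≤ ∑ v, #(f v) :=
  Nat.sInf_le ⟨f, hf, rfl⟩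

lemma exists_isRainbowDF_sum_card_eq_rainbowNum (k : ℕ) :
    ∃ f : V → Finset (Fin k), G.IsRainbowDF f ∧ ∑ v, #(f v) = G.rainbowNum k := by
  obtain ⟨f, hf, hsum⟩ := Nat.sInf_mem
    (s := {w | ∃ f : V → Finset (Fin k), G.IsRainbowDF f ∧ w = ∑ v, #(f v)})
    ⟨_, fun _ => univ, fun _ hv c => absurd (hv ▸ mem_univ c) (notMem_empty c), rfl⟩
  exact ⟨f, hf, hsum.symm⟩

lemma rainbowNum_le_mul_domNum (k : ℕ) : G.rainbowNum k ≤ k * G.domNum := by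
  classical
  obtain ⟨S, hS, hcard⟩ := G.exists_isDomSet_card_eq_domNum
  calc G.rainbowNum k ≤ ∑ v, #(if v ∈ S then (univ : Finset (Fin k)) else ∅) :=
        rainbowNum_le hS.isRainbowDF_ite
    _ = k * G.domNum := by simp [apply_ite, sum_ite_mem, ← hcard, mul_comm]

lemma sum_card_filter_nonempty {α : Type*} (f : V → Finset α) :
    ∑ v with (f v).Nonempty, #(f v) = ∑ v, #(f v) :=
  sum_filter_of_ne fun _ _ h => card_ne_zero.1 h

lemma card_filter_nonempty_le_sum_card {α : Type*} (f : V → Finset α) :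
    #{v | (f v).Nonempty} ≤ ∑ v, #(f v) := by
  rw [← sum_card_filter_nonempty]
  simpa using card_nsmul_le_sum _ (fun v => #(f v)) 1 fun v hv => card_pos.2 (mem_filter.1 hv).2

lemma IsRainbowDF.add_card_filter_nonempty_le [DecidableRel G.Adj] {k : ℕ}
    {f : V → Finset (Fin k)} (hf : G.IsRainbowDF f) {x : V} (hx : f x = ∅) :
    k + #{v | (f v).Nonempty} ≤ #{u | (f u).Nonempty ∧ G.Adj x u} + ∑ v, #(f v) := by
  classical
  set T : Finset V := {u | (f u).Nonempty ∧ G.Adj x u}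
  have hTS : T ⊆ ({v | (f v).Nonempty} : Finset V) := fun u hu =>
    mem_filter.2 ⟨mem_univ u, (mem_filter.1 hu).2.1⟩
  have hk : k ≤ ∑ u ∈ T, #(f u) :=
    calc k = #(univ : Finset (Fin k)) := (card_fin k).symm
      _ ≤ #(T.biUnion f) := card_le_card fun c _ => by
          obtain ⟨u, hadj, hc⟩ := hf x hx c
          exact mem_biUnion.2 ⟨u, mem_filter.2 ⟨mem_univ u, ⟨c, hc⟩, hadj⟩, hc⟩
      _ ≤ ∑ u ∈ T, #(f u) := card_biUnion_le
  have := sum_add_card_le_card_add_sum hTS fun v hv => card_pos.2 (mem_filter.1 hv).2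
  rw [sum_card_filter_nonempty] at this
  omega

lemma IsRainbowDF.min_card_domNum_le_sum_card {k : ℕ} (hk : 1 ≤ k) {f : V → Finset (Fin k)}
    (hf : G.IsRainbowDF f) : min (Fintype.card V) (G.domNum + k - 2) ≤ ∑ v, #(f v) := by
  classical
  set w := ∑ v, #(f v)
  set S : Finset V := {v | (f v).Nonempty}
  have hSw : #S ≤ w := card_filter_nonempty_le_sum_card f
  by_cases hSuniv : S = univ
  · rw [hSuniv, card_univ] at hSw
    exact min_le_of_left_le hSw
  obtain ⟨v₀, hv₀⟩ := not_forall.1 (mt eq_univ_iff_forall.2 hSuniv)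
  have hempty {x : V} (hx : x ∉ S) : f x = ∅ := by simpa [S] using hx
  have hcover {x : V} (hx : x ∉ S) : k + #S ≤ #{u ∈ S | G.Adj x u} + w := by
    rw [filter_filter]
    exact hf.add_card_filter_nonempty_le (hempty hx)
  have hdominated {x : V} (hx : x ∉ S) : 0 < #{u ∈ S | G.Adj x u} := by
    obtain ⟨u, hadj, hc⟩ := hf x (hempty hx) ⟨0, hk⟩
    exact card_pos.2 ⟨u, mem_filter.2 ⟨mem_filter.2 ⟨mem_univ u, _, hc⟩, hadj⟩⟩
  obtain ⟨R, hRN, hR⟩ := exists_subset_card_eq (s := {u ∈ S | G.Adj v₀ u})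
    (n := k - 1 - (w - #S)) (by have := hcover hv₀; omega)
  have hRS : R ⊆ S := hRN.trans (filter_subset _ _)
  have hdom : G.IsDomSet ↑(insert v₀ (S \ R)) :=
    isDomSet_insert_sdiff (fun u hu => (mem_filter.1 (hRN hu)).2) fun x hx => by
      have := hcover hx
      have := hdominated hx
      omega
  have hγ := (domNum_le hdom).trans (card_insert_le _ _)
  rw [card_sdiff_of_subset hRS] at hγ
  have := card_le_card hRS
  omega

end SimpleGraph

/-- `min{|V(G)|, γ(G)+k−2} ≤ γ_{rk}(G) ≤ k·γ(G)` for `k ≥ 1`. -/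
theorem min_card_domNum_le_rainbowNum_le {V : Type*} [Fintype V] (G : SimpleGraph V)
    (k : ℕ) (hk : 1 ≤ k) :
    min (Fintype.card V) (G.domNum + k - 2) ≤ G.rainbowNum k ∧
      G.rainbowNum k ≤ k * G.domNum := by
  obtain ⟨f, hf, hweight⟩ := G.exists_isRainbowDF_sum_card_eq_rainbowNum k
  exact ⟨hweight ▸ hf.min_card_domNum_le_sum_card hk, G.rainbowNum_le_mul_domNum k⟩
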